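/- arXiv:2110.15902 — 6 statements merged into one kernel-verified Lean document; each statement's English description precedes it below -/
import Mathlib

section
/- Let S, P ⊆ 𝒢 be isomorphism-invariant sets with P ⊆ S. If for every G ∈ S there exists H ∈ P such that Ḡ embeds into H̄ (i.e., there is an injective group homomorphism Ḡ → H̄), then P is dense in S, i.e., S is contained in the closure of P in 𝒢. -/
/-- The set of group multiplication tables on `ℕ` with identity `0`. -/
def GroupTables : Set (ℕ × ℕ → ℕ) :=
  {m | (∀ a b c : ℕ, m (m (a, b), c) = m (a, m (b, c))) ∧
       (∀ a : ℕ, m (a, 0) = a) ∧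
       (∀ a : ℕ, m (0, a) = a) ∧
       (∀ a : ℕ, ∃ b : ℕ, m (a, b) = 0 ∧ m (b, a) = 0)}

/-- The carrier of the group `Ḡ` associated to a table `G ∈ 𝒢` (a copy of `ℕ`). -/
def Carrier (_G : ↥GroupTables) : Type := ℕ

noncomputable instance instGroupCarrier (G : ↥GroupTables) : Group (Carrier G) where
  mul a b := G.1 (a, b)
  one := (0 : ℕ)
  inv a := Classical.choose (G.2.2.2.2 a)
  mul_assoc a b c := G.2.1 a b c
  one_mul a := G.2.2.2.1 a
  mul_one a := G.2.2.1 a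
  inv_mul_cancel a := (Classical.choose_spec (G.2.2.2.2 a)).2

/-- Inclusion of `ℕ` into the carrier of `Ḡ`. -/
def toC (G : ↥GroupTables) (n : ℕ) : Carrier G := n

/-- Projection of the carrier of `Ḡ` back to `ℕ`. -/
def fromC (G : ↥GroupTables) (x : Carrier G) : ℕ := x

/-- A set of tables is isomorphism-invariant if membership only depends on the
isomorphism type of the associated group. -/
def IsoInvariant (P : Set ↥GroupTables) : Prop :=
  ∀ G H : ↥GroupTables, Nonempty (Carrier G ≃* Carrier H) → (G ∈ P ↔ H ∈ P)

/-!
A basic open neighbourhood of `G` in `𝒢` only prescribes finitely many entries of the table.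
Given an embedding `f : Ḡ → H̄`, extend `f`, restricted to a finite set of arguments and values
of `G` containing `0`, to a bijection `e : ℕ ≃ H̄`, and pull the group structure of `H̄` back
along `e`. The resulting table codes a group isomorphic to `H̄`, hence lies in `P`, and agrees
with `G` on the prescribed entries because `f` is multiplicative there.
-/

theorem mem_closure_of_forall_finset_eqOn {ι : Type*} {π : ι → Type*}
    [∀ i, TopologicalSpace (π i)] {s : Set (∀ i, π i)} {x : ∀ i, π i}
    (h : ∀ F : Finset ι, ∃ y ∈ s, ∀ i ∈ F, y i = x i) : x ∈ closure s := by
  rw [mem_closure_iff_nhds]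
  intro u hu
  rw [nhds_pi, Filter.mem_pi] at hu
  obtain ⟨I, hI, t, ht, htu⟩ := hu
  obtain ⟨y, hys, hyx⟩ := h hI.toFinset
  refine ⟨y, htu fun i hi => ?_, hys⟩
  rw [hyx i (hI.mem_toFinset.2 hi)]
  exact mem_of_mem_nhds (ht i)

theorem exists_equiv_eqOn_of_injective {β : Type*} {g : ℕ → β} (hg : Function.Injective g)
    (e : ℕ ≃ β) (s : Finset ℕ) : ∃ e' : ℕ ≃ β, ∀ n ∈ s, e' n = g n := by
  have hs : Cardinal.mk (s : Set ℕ) < Cardinal.mk ℕ := by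
    rw [Cardinal.mk_nat, Cardinal.lt_aleph0_iff_set_finite]
    exact s.finite_toSet
  obtain ⟨e', he'⟩ :=
    Cardinal.extend_function_of_lt ((Function.Embedding.subtype _).trans ⟨g, hg⟩) hs ⟨e⟩
  exact ⟨e', fun n hn => he' ⟨n, hn⟩⟩

namespace GroupTables

variable {H : Type*} [Group H]

def ofEquiv (e : ℕ ≃ H) (he : e 0 = 1) : ↥GroupTables :=
  ⟨fun p => e.symm (e p.1 * e p.2), by
    refine ⟨fun a b c => ?_, fun a => ?_, fun a => ?_, fun a => ⟨e.symm (e a)⁻¹, ?_, ?_⟩⟩ <;>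
      simp [he, mul_assoc, e.symm_apply_eq]⟩

def ofEquivMulEquiv (e : ℕ ≃ H) (he : e 0 = 1) : Carrier (ofEquiv e he) ≃* H where
  toEquiv := e
  map_mul' a b := e.apply_symm_apply (e a * e b)

theorem ofEquiv_apply_eq {G : ↥GroupTables} (f : Carrier G →* H) (e : ℕ ≃ H) (he : e 0 = 1)
    {a b : ℕ} (ha : e a = f a) (hb : e b = f b) (hab : e (G.1 (a, b)) = f (G.1 (a, b))) :
    (ofEquiv e he).1 (a, b) = G.1 (a, b) := by
  show e.symm (e a * e b) = G.1 (a, b)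
  rw [e.symm_apply_eq, ha, hb, hab]
  exact (map_mul f (toC G a) (toC G b)).symm

end GroupTables

theorem dense_of_embeddable_general (S P : Set ↥GroupTables)
    (hP : IsoInvariant P)
    (h : ∀ G ∈ S, ∃ H ∈ P, ∃ f : Carrier G →* Carrier H, Function.Injective f) :
    S ⊆ closure P := by
  intro G hG
  rw [closure_subtype]
  obtain ⟨H, hHP, f, hf⟩ := h G hG
  refine mem_closure_of_forall_finset_eqOn fun F => ?_
  classical
  let N : Finset ℕ := insert 0 (F.biUnion fun i => {i.1, i.2, G.1 i})
  obtain ⟨e, he⟩ := exists_equiv_eqOn_of_injective hf (Equiv.refl ℕ) N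
  have he0 : e 0 = 1 := (he 0 (Finset.mem_insert_self _ _)).trans (map_one f)
  have hN {i : ℕ × ℕ} (hi : i ∈ F) {n : ℕ} (hn : n = i.1 ∨ n = i.2 ∨ n = G.1 i) : n ∈ N :=
    Finset.mem_insert_of_mem (Finset.mem_biUnion.2 ⟨i, hi, by simpa using hn⟩)
  have hK : GroupTables.ofEquiv e he0 ∈ P :=
    (hP _ H ⟨GroupTables.ofEquivMulEquiv e he0⟩).2 hHP
  refine ⟨_, ⟨_, hK, rfl⟩, fun i hi => ?_⟩
  exact GroupTables.ofEquiv_apply_eq f e he0 (he _ (hN hi (by simp)))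
    (he _ (hN hi (by simp))) (he _ (hN hi (by simp)))

/-- If `S, P ⊆ 𝒢` are isomorphism-invariant, `P ⊆ S`, and every group coded in `S`
embeds into some group coded in `P`, then `P` is dense in `S`. -/
theorem dense_of_embeddable (S P : Set ↥GroupTables)
    (hS : IsoInvariant S) (hP : IsoInvariant P) (hPS : P ⊆ S)
    (h : ∀ G ∈ S, ∃ H ∈ P, ∃ f : Carrier G →* Carrier H, Function.Injective f) :
    S ⊆ closure P :=
  dense_of_embeddable_general S P hP h
end

section
/- For any nonempty basic clopen sets U, V ⊆ 𝒢 there exists a bijection φ : ℕ → ℕ with φ(0) = 0 such that h_φ(U) ∩ V ≠ ∅. -/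
/-! Given `G ∈ U` and `H ∈ V`, transport the product group `G × H` to `ℕ` along two
bijections `ℕ ≃ ℕ × ℕ`: one that is `n ↦ (n, 0)` on a long initial segment, so that the
transported table lies in `U`, and one that is `n ↦ (0, n)` there, so that it lies in `V`.
The two transported tables are conjugate by the composite bijection, which fixes `0`. -/

lemma Nat.exists_equiv_eq_of_le {β : Type*} [Denumerable β] (f : ℕ ↪ β) (N : ℕ) :
    ∃ e : ℕ ≃ β, ∀ n ≤ N, e n = f n := by
  have hs : Cardinal.mk (Set.Iic N) < Cardinal.mk ℕ := by
    rw [Cardinal.mk_nat]; exact (Set.finite_Iic N).lt_aleph0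
  obtain ⟨e, he⟩ := Cardinal.extend_function_of_lt ((Function.Embedding.subtype _).trans f) hs
    ⟨(Denumerable.eqv β).symm⟩
  exact ⟨e, fun n hn => he ⟨n, hn⟩⟩

def prodTable (e : ℕ ≃ ℕ × ℕ) (G H : ℕ × ℕ → ℕ) : ℕ × ℕ → ℕ :=
  fun p => e.symm (G ((e p.1).1, (e p.2).1), H ((e p.1).2, (e p.2).2))

lemma prodTable_mem {G H : ℕ × ℕ → ℕ} (hG : G ∈ GroupTables) (hH : H ∈ GroupTables)
    (e : ℕ ≃ ℕ × ℕ) (he : e 0 = (0, 0)) : prodTable e G H ∈ GroupTables := by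
  obtain ⟨G_assoc, G_mul_zero, G_zero_mul, G_inv⟩ := hG
  obtain ⟨H_assoc, H_mul_zero, H_zero_mul, H_inv⟩ := hH
  refine ⟨fun a b c => ?_, fun a => ?_, fun a => ?_, fun a => ?_⟩
  · simp [prodTable, G_assoc, H_assoc]
  · simp [prodTable, he, G_mul_zero, H_mul_zero]
  · simp [prodTable, he, G_zero_mul, H_zero_mul]
  · obtain ⟨b₁, hb₁, hb₁'⟩ := G_inv (e a).1
    obtain ⟨b₂, hb₂, hb₂'⟩ := H_inv (e a).2
    refine ⟨e.symm (b₁, b₂), ?_, ?_⟩ <;> simp [prodTable, hb₁, hb₂, hb₁', hb₂', ← he]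

lemma prodTable_apply_of_eq_left {G H : ℕ × ℕ → ℕ} (hH : H ∈ GroupTables) {e : ℕ ≃ ℕ × ℕ}
    {a b : ℕ} (ha : e a = (a, 0)) (hb : e b = (b, 0)) (hab : e (G (a, b)) = (G (a, b), 0)) :
    prodTable e G H (a, b) = G (a, b) := by
  rw [prodTable, ha, hb, hH.2.1, ← hab, Equiv.symm_apply_apply]

lemma prodTable_apply_of_eq_right {G H : ℕ × ℕ → ℕ} (hG : G ∈ GroupTables) {e : ℕ ≃ ℕ × ℕ}
    {a b : ℕ} (ha : e a = (0, a)) (hb : e b = (0, b)) (hab : e (H (a, b)) = (0, H (a, b))) :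
    prodTable e G H (a, b) = H (a, b) := by
  rw [prodTable, ha, hb, hG.2.1, ← hab, Equiv.symm_apply_apply]

lemma prodTable_apply_eq_conj (e e' : ℕ ≃ ℕ × ℕ) (G H : ℕ × ℕ → ℕ) (i j : ℕ) :
    prodTable e' G H (i, j) = (e.trans e'.symm)
      (prodTable e G H ((e.trans e'.symm).symm i, (e.trans e'.symm).symm j)) := by
  simp [prodTable]

lemma exists_bound_fin_table {k : ℕ} (m : Fin k × Fin k → ℕ) :
    ∃ N, ∀ i j : Fin k, (i : ℕ) ≤ N ∧ (j : ℕ) ≤ N ∧ m (i, j) ≤ N := by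
  refine ⟨k + Finset.univ.sup m, fun i j => ⟨by omega, by omega, ?_⟩⟩
  have := Finset.le_sup (f := m) (Finset.mem_univ (i, j))
  omega

/-- For any nonempty basic clopen sets `U, V ⊆ 𝒢` there is a bijection `φ : ℕ → ℕ`
fixing `0` such that `h_φ(U) ∩ V ≠ ∅`, i.e. some `H ∈ V` is the pushforward along `φ`
of some `G ∈ U`. -/
theorem basic_clopen_homogeneity (k₁ k₂ : ℕ)
    (m₁ : Fin k₁ × Fin k₁ → ℕ) (m₂ : Fin k₂ × Fin k₂ → ℕ)
    (hU : {G : ↥GroupTables | ∀ i j : Fin k₁, G.1 ((i : ℕ), (j : ℕ)) = m₁ (i, j)}.Nonempty)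
    (hV : {G : ↥GroupTables | ∀ i j : Fin k₂, G.1 ((i : ℕ), (j : ℕ)) = m₂ (i, j)}.Nonempty) :
    ∃ φ : ℕ ≃ ℕ, φ 0 = 0 ∧
      ∃ G ∈ {G : ↥GroupTables | ∀ i j : Fin k₁, G.1 ((i : ℕ), (j : ℕ)) = m₁ (i, j)},
      ∃ H ∈ {G : ↥GroupTables | ∀ i j : Fin k₂, G.1 ((i : ℕ), (j : ℕ)) = m₂ (i, j)},
      ∀ i j : ℕ, H.1 (i, j) = φ (G.1 (φ.symm i, φ.symm j)) := by
  obtain ⟨G, hG⟩ := hU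
  obtain ⟨H, hH⟩ := hV
  obtain ⟨N₁, hN₁⟩ := exists_bound_fin_table m₁
  obtain ⟨N₂, hN₂⟩ := exists_bound_fin_table m₂
  obtain ⟨ψ, hψ⟩ := Nat.exists_equiv_eq_of_le (Function.Embedding.sectL ℕ 0) N₁
  obtain ⟨χ, hχ⟩ := Nat.exists_equiv_eq_of_le (Function.Embedding.sectR 0 ℕ) N₂
  have hψ₀ : ψ 0 = (0, 0) := hψ 0 N₁.zero_le
  have hχ₀ : χ 0 = (0, 0) := hχ 0 N₂.zero_le
  refine ⟨ψ.trans χ.symm, by simp [hψ₀, ← hχ₀],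
    ⟨prodTable ψ G H, prodTable_mem G.2 H.2 ψ hψ₀⟩, fun i j => ?_,
    ⟨prodTable χ G H, prodTable_mem G.2 H.2 χ hχ₀⟩, fun i j => ?_,
    prodTable_apply_eq_conj ψ χ G H⟩
  · obtain ⟨hi, hj, hij⟩ := hN₁ i j
    rw [← hG i j] at hij ⊢
    exact prodTable_apply_of_eq_left H.2 (hψ _ hi) (hψ _ hj) (hψ _ hij)
  · obtain ⟨hi, hj, hij⟩ := hN₂ i j
    rw [← hH i j] at hij ⊢
    exact prodTable_apply_of_eq_right G.2 (hχ _ hi) (hχ _ hj) (hχ _ hij)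
end

section
/- For every group H, the isomorphism class I_H = {G ∈ 𝒢 : Ḡ ≅ H} is either meager or comeager in 𝒢. -/
/-!
If `H` is not countably infinite, `I_H` is empty. Otherwise fix `eH : ℕ ≃ H`; then `I_H` is the
projection of the Gδ set of pairs `(G, f)` where `f : ℕ → ℕ` is a bijection turning `Ḡ` into the
copy of `H` carried by `eH`. So `I_H` is analytic, and analytic sets have the Baire property
(Lusin–Sierpiński). `I_H` is invariant under relabelling the elements by permutations of `ℕ`
fixing `0`, and this action is topologically transitive: two basic open sets, prescribing finitely
many entries of `G₀` resp. `G₁`, are met by two labellings of `Ḡ₀ × Ḡ₁` that differ by a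
permutation. A Baire measurable set whose stabilizer acts topologically transitively is meagre or
comeagre, since otherwise some nonempty open set would be meagre.
-/

open Set Filter Topology MeasureTheory

theorem IsGδ.polishSpace {α : Type*} [TopologicalSpace α] [PolishSpace α] {s : Set α}
    (hs : IsGδ s) : PolishSpace s := by
  obtain ⟨u, hu, rfl⟩ := isGδ_iff_eq_iInter_nat.1 hs
  have := fun n => (hu n).polishSpace
  let F : (⋂ n, u n : Set α) → ∀ n, u n := fun x n => ⟨x, mem_iInter.1 x.2 n⟩
  have hrange : range F = {z | ∀ n, (z n : α) = z 0} := by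
    refine Subset.antisymm (range_subset_iff.2 fun x n => rfl) fun z hz => ?_
    refine ⟨⟨z 0, mem_iInter.2 fun n => hz n ▸ (z n).2⟩, funext fun n => Subtype.ext (hz n).symm⟩
  refine IsClosedEmbedding.polishSpace (f := F) ⟨.of_comp (by fun_prop)
    (continuous_subtype_val.comp (continuous_apply 0)) .subtypeVal, ?_⟩
  rw [hrange, ofPred_forall]
  exact isClosed_iInter fun n => isClosed_eq (by fun_prop) (by fun_prop)

section Baire

variable {X : Type*} [TopologicalSpace X]

theorem exists_baireMeasurableSet_hull [SecondCountableTopology X] (s : Set X) :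
    ∃ t, s ⊆ t ∧ t ⊆ closure s ∧ BaireMeasurableSet t ∧
      ∀ z ⊆ t \ s, BaireMeasurableSet z → IsMeagre z := by
  set m := ⋃₀ {u : Set X | IsOpen u ∧ IsMeagre (u ∩ s)}
  have hm : IsOpen m := isOpen_sUnion fun _ hu => hu.1
  have hms : IsMeagre (m ∩ s) := by
    obtain ⟨T, hTc, hT, hTm⟩ := TopologicalSpace.isOpen_sUnion_countable
      {u : Set X | IsOpen u ∧ IsMeagre (u ∩ s)} fun _ hu => hu.1
    rw [show m = ⋃₀ T from hTm.symm, sUnion_eq_biUnion, iUnion₂_inter]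
    exact isMeagre_biUnion hTc fun u hu => (hT hu).2
  have mem_m {u : Set X} (hu : IsOpen u) (hus : IsMeagre (u ∩ s)) : u ⊆ m :=
    subset_sUnion_of_mem ⟨hu, hus⟩
  refine ⟨s ∪ mᶜ, subset_union_left, union_subset subset_closure ?_, ?_, fun z hz hbz => ?_⟩
  · refine compl_subset_comm.1 (mem_m isClosed_closure.isOpen_compl ?_)
    exact IsMeagre.empty.mono fun x hx => hx.1 (subset_closure hx.2)
  · have : s ∪ mᶜ = m ∩ s ∪ mᶜ := by
      ext x; by_cases x ∈ m <;> simp [*]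
    rw [this]
    exact hms.baireMeasurableSet.union hm.baireMeasurableSet.compl
  · obtain ⟨u, hu, hzu⟩ := hbz.residualEq_isOpen
    have hzu := eventuallyEq_set.1 hzu
    have hum : u ⊆ m := mem_m hu <| by
      filter_upwards [hzu] with x hx ⟨hxu, hxs⟩ using (hz (hx.2 hxu)).2 hxs
    filter_upwards [hzu] with x hx hxz
    exact ((hz hxz).1.resolve_left (hz hxz).2) (hum (hx.1 hxz))

theorem eq_of_forall_mem_closure_image_cylinder [T2Space X] {f : (ℕ → ℕ) → X}
    (hf : Continuous f) {x : X} {y : ℕ → ℕ} (h : ∀ n, x ∈ closure (f '' PiNat.cylinder y n)) :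
    f y = x := by
  by_contra hne
  obtain ⟨u, v, hu, hv, hyu, hxv, huv⟩ := t2_separation hne
  obtain ⟨_, ⟨z, n, rfl⟩, hyc, hcu⟩ := (PiNat.isTopologicalBasis_cylinders fun _ => ℕ)
    |>.exists_subset_of_mem_open hyu (hu.preimage hf)
  rw [← PiNat.mem_cylinder_iff_eq.1 hyc] at hcu
  have hdisj : Disjoint v (f '' PiNat.cylinder y n) :=
    huv.symm.mono_right (image_subset_iff.2 hcu)
  exact (mem_closure_iff.1 (h n) v hv hxv).ne_empty hdisj.inter_eq

theorem exists_forall_res_mem {T : Set (List ℕ)} (hnil : [] ∈ T)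
    (hcons : ∀ l ∈ T, ∃ n, n :: l ∈ T) : ∃ y : ℕ → ℕ, ∀ k, PiNat.res y k ∈ T := by
  choose next hnext using hcons
  let branch : ℕ → T := fun k => Nat.rec ⟨[], hnil⟩ (fun _ l => ⟨next l l.2 :: l, hnext l l.2⟩) k
  refine ⟨fun k => next (branch k).1 (branch k).2, fun k => ?_⟩
  suffices PiNat.res _ k = (branch k).1 from this ▸ (branch k).2
  induction k with
  | zero => rfl
  | succ k ih => rw [PiNat.res_succ, ih]

/-- The sequences in `ℕ → ℕ` whose first `l.length` terms, in reverse order, form `l`. -/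
def listCylinder (l : List ℕ) : Set (ℕ → ℕ) := {y | PiNat.res y l.length = l}

theorem listCylinder_nil : listCylinder [] = univ :=
  eq_univ_of_forall fun _ => rfl

theorem listCylinder_res (y : ℕ → ℕ) (k : ℕ) :
    listCylinder (PiNat.res y k) = PiNat.cylinder y k := by
  rw [PiNat.cylinder_eq_res, listCylinder, PiNat.res_length]

theorem listCylinder_eq_iUnion (l : List ℕ) : listCylinder l = ⋃ n, listCylinder (n :: l) := by
  ext y
  simp only [listCylinder, mem_iUnion, mem_ofPred_eq, List.length_cons, PiNat.res_succ,
    List.cons.injEq]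
  exact ⟨fun h => ⟨_, rfl, h⟩, fun ⟨_, _, h⟩ => h⟩

theorem MeasureTheory.AnalyticSet.baireMeasurableSet [SecondCountableTopology X] [T2Space X]
    {s : Set X} (hs : AnalyticSet s) : BaireMeasurableSet s := by
  rw [AnalyticSet] at hs
  rcases hs with rfl | ⟨f, hf, rfl⟩
  · exact IsMeagre.empty.baireMeasurableSet
  choose hull subset_hull hull_subset_closure baireMeasurableSet_hull isMeagre_of_subset_hull_diff
    using exists_baireMeasurableSet_hull (X := X)
  let A : List ℕ → Set X := fun l => hull (f '' listCylinder l)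
  let N := ⋃ l, A l \ ⋃ n, A (n :: l)
  have hN : IsMeagre N := isMeagre_iUnion fun l => by
    refine isMeagre_of_subset_hull_diff _ _ (sdiff_subset_sdiff_right ?_)
      ((baireMeasurableSet_hull _).diff (.iUnion fun _ => baireMeasurableSet_hull _))
    rw [listCylinder_eq_iUnion, image_iUnion]
    exact iUnion_mono fun n => subset_hull _
  have hrange : range f ⊆ A [] := by
    rw [← image_univ, ← listCylinder_nil]; exact subset_hull _
  have hcover : A [] \ range f ⊆ N := by
    -- `{l | x ∈ A l}` is a pruned tree, and along any branch `y` the hulls force `f y = x`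
    intro x ⟨hx, hxf⟩
    by_contra hxN
    refine hxf ?_
    obtain ⟨y, hy⟩ := exists_forall_res_mem (T := {l | x ∈ A l}) hx fun l hl => by
      by_contra! h
      exact hxN (mem_iUnion.2 ⟨l, hl, by simpa using h⟩)
    exact ⟨y, eq_of_forall_mem_closure_image_cylinder hf fun k =>
      listCylinder_res y k ▸ hull_subset_closure _ (hy k)⟩
  rw [← sdiff_sdiff_cancel_left hrange]
  exact (baireMeasurableSet_hull _).diff (hN.mono hcover).baireMeasurableSet

theorem BaireMeasurableSet.isMeagre_or_mem_residual [BaireSpace X] {s : Set X}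
    (hs : BaireMeasurableSet s)
    (htrans : ∀ u v : Set X, IsOpen u → IsOpen v → u.Nonempty → v.Nonempty →
      ∃ h : X ≃ₜ X, h ⁻¹' s = s ∧ (u ∩ h ⁻¹' v).Nonempty) :
    IsMeagre s ∨ s ∈ residual X := by
  obtain ⟨u, hu, hsu⟩ := hs.residualEq_isOpen
  obtain ⟨v, hv, hsv⟩ := hs.compl.residualEq_isOpen
  rcases u.eq_empty_or_nonempty with rfl | hu₀
  · exact .inl (eventuallyEq_empty.1 hsu)
  rcases v.eq_empty_or_nonempty with rfl | hv₀
  · exact .inr (by simpa using eventuallyEq_empty.1 hsv)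
  obtain ⟨h, hhs, hne⟩ := htrans u v hu hv hu₀ hv₀
  refine absurd ?_ (not_isMeagre_of_isOpen (hu.inter (hv.preimage h.continuous)) hne)
  have hsv' := (tendsto_residual_of_isOpenMap h.continuous h.isOpenMap).eventually
    (eventuallyEq_set.1 hsv)
  filter_upwards [eventuallyEq_set.1 hsu, hsv'] with x hxu hxv ⟨hx, hhx⟩
  exact hxv.2 hhx (hhs.symm ▸ hxu.2 hx : x ∈ h ⁻¹' s)

end Baire

theorem Continuous.apply_of_discreteTopology {Z ι Y : Type*} [TopologicalSpace Z]
    [TopologicalSpace ι] [DiscreteTopology ι] [TopologicalSpace Y] {w : Z → ι → Y} {g : Z → ι}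
    (hw : Continuous w) (hg : Continuous g) : Continuous fun z => w z (g z) :=
  (continuous_prod_of_discrete_right (f := fun p : (ι → Y) × ι => p.1 p.2) |>.2 fun i =>
    continuous_apply i).comp (hw.prodMk hg)

theorem isOpen_setOf_eq_of_discreteTopology {Z Y : Type*} [TopologicalSpace Z]
    [TopologicalSpace Y] [DiscreteTopology Y] {F G : Z → Y} (hF : Continuous F)
    (hG : Continuous G) : IsOpen {z | F z = G z} :=
  (isOpen_discrete {p : Y × Y | p.1 = p.2}).preimage (hF.prodMk hG)

theorem exists_equiv_eqOn_of_finite {α β : Type*} [Infinite α] {s : Set α} (hs : s.Finite)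
    (f : α ↪ β) (h : Nonempty (α ≃ β)) : ∃ g : α ≃ β, EqOn g f s := by
  obtain ⟨g, hg⟩ := Cardinal.extend_function_of_lt ((Function.Embedding.subtype _).trans f)
    ((Cardinal.lt_aleph0_iff_set_finite.2 hs).trans_le (Cardinal.aleph0_le_mk α)) h
  exact ⟨g, fun x hx => hg ⟨x, hx⟩⟩

theorem isGδ_groupTables : IsGδ (GroupTables : Set (ℕ × ℕ → ℕ)) := by
  have hval (p : ℕ × ℕ) (n : ℕ) : IsOpen {m : ℕ × ℕ → ℕ | m p = n} :=
    isOpen_setOf_eq_of_discreteTopology (continuous_apply p) continuous_const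
  have hassoc (a b c : ℕ) : IsOpen {m : ℕ × ℕ → ℕ | m (m (a, b), c) = m (a, m (b, c))} :=
    isOpen_setOf_eq_of_discreteTopology
      (continuous_id.apply_of_discreteTopology ((continuous_apply _).prodMk continuous_const))
      (continuous_id.apply_of_discreteTopology (continuous_const.prodMk (continuous_apply _)))
  simp only [GroupTables, ofPred_and, ofPred_forall, ofPred_exists]
  exact .inter (.iInter fun a => .iInter fun b => .iInter fun c => (hassoc a b c).isGδ)
    (.inter (.iInter fun a => (hval _ _).isGδ) (.inter (.iInter fun a => (hval _ _).isGδ)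
      (.iInter fun a => (isOpen_iUnion fun b => (hval _ _).inter (hval _ _)).isGδ)))

instance : PolishSpace ↥GroupTables := isGδ_groupTables.polishSpace

namespace GroupTables

theorem exists_finset_forall_mem_of_isOpen {U : Set GroupTables} (hU : IsOpen U)
    {G : GroupTables} (hG : G ∈ U) :
    ∃ t : Finset (ℕ × ℕ), ∀ G' : GroupTables, (∀ p ∈ t, G'.1 p = G.1 p) → G' ∈ U := by
  obtain ⟨W, hW, rfl⟩ := isOpen_induced_iff.1 hU
  obtain ⟨t, u, hu, htW⟩ := isOpen_pi_iff.1 hW G.1 hG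
  exact ⟨t, fun G' hG' => htW fun p hp => hG' p hp ▸ (hu p hp).2⟩

def carrierEquiv (G : GroupTables) : ℕ ≃ Carrier G := ⟨toC G, fromC G, fun _ => rfl, fun _ => rfl⟩

variable {K : Type*} [Group K]

def pullback (e : ℕ ≃ K) (he : e 0 = 1) : GroupTables :=
  ⟨fun p => e.symm (e p.1 * e p.2), fun a b c => by simp [mul_assoc], fun a => by simp [he],
    fun a => by simp [he], fun a => ⟨e.symm (e a)⁻¹, by simp [← he], by simp [← he]⟩⟩

def pullbackMulEquiv (e : ℕ ≃ K) (he : e 0 = 1) : Carrier (pullback e he) ≃* K :=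
  { (carrierEquiv _).symm.trans e with map_mul' := fun _ _ => e.apply_symm_apply _ }

noncomputable def relabel (σ : Equiv.Perm ℕ) (hσ : σ 0 = 0) (G : GroupTables) : GroupTables :=
  pullback (σ.symm.trans (carrierEquiv G)) (congrArg (toC G) (σ.symm_apply_eq.2 hσ.symm))

theorem relabel_apply (σ : Equiv.Perm ℕ) (hσ : σ 0 = 0) (G : GroupTables) (p : ℕ × ℕ) :
    (relabel σ hσ G).1 p = σ (G.1 (σ.symm p.1, σ.symm p.2)) := rfl

theorem continuous_relabel (σ : Equiv.Perm ℕ) (hσ : σ 0 = 0) : Continuous (relabel σ hσ) :=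
  continuous_induced_rng.2 <| continuous_pi fun p => by
    show Continuous fun G : GroupTables => σ (G.1 (σ.symm p.1, σ.symm p.2))
    exact continuous_of_discreteTopology.comp ((continuous_apply _).comp continuous_subtype_val)

theorem relabel_relabel_symm (σ : Equiv.Perm ℕ) (hσ : σ 0 = 0) (hσ' : σ.symm 0 = 0)
    (G : GroupTables) : relabel σ hσ (relabel σ.symm hσ' G) = G :=
  Subtype.ext <| funext fun p => by simp [relabel_apply]

noncomputable def relabelHomeomorph (σ : Equiv.Perm ℕ) (hσ : σ 0 = 0) :
    GroupTables ≃ₜ GroupTables where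
  toFun := relabel σ hσ
  invFun := relabel σ.symm (σ.symm_apply_eq.2 hσ.symm)
  left_inv G := by simpa using relabel_relabel_symm σ.symm _ hσ G
  right_inv := relabel_relabel_symm σ hσ _
  continuous_toFun := continuous_relabel σ hσ
  continuous_invFun := continuous_relabel _ _

section Product

variable (G₀ G₁ : GroupTables) {β γ : ℕ ≃ ℕ × ℕ}

/-- The product `Ḡ₀ × Ḡ₁`, with its elements labelled by `β`. -/
noncomputable def prod (β : ℕ ≃ ℕ × ℕ) (hβ : β 0 = (0, 0)) : GroupTables :=
  pullback (β.trans ((carrierEquiv G₀).prodCongr (carrierEquiv G₁)))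
    (by rw [Equiv.trans_apply, hβ]; rfl)

theorem prod_apply (hβ : β 0 = (0, 0)) (a b : ℕ) :
    (prod G₀ G₁ β hβ).1 (a, b) = β.symm (G₀.1 ((β a).1, (β b).1), G₁.1 ((β a).2, (β b).2)) :=
  rfl

variable {G₀ G₁}

theorem prod_apply_eq_left (hβ : β 0 = (0, 0)) {a b : ℕ} (ha : β a = (a, 0)) (hb : β b = (b, 0))
    (hab : β (G₀.1 (a, b)) = (G₀.1 (a, b), 0)) : (prod G₀ G₁ β hβ).1 (a, b) = G₀.1 (a, b) := by
  rw [prod_apply, ha, hb, G₁.2.2.1 0, ← hab, Equiv.symm_apply_apply]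

theorem prod_apply_eq_right (hγ : γ 0 = (0, 0)) {a b : ℕ} (ha : γ a = (0, a)) (hb : γ b = (0, b))
    (hab : γ (G₁.1 (a, b)) = (0, G₁.1 (a, b))) : (prod G₀ G₁ γ hγ).1 (a, b) = G₁.1 (a, b) := by
  rw [prod_apply, ha, hb, G₀.2.2.1 0, ← hab, Equiv.symm_apply_apply]

theorem relabel_prod (hβ : β 0 = (0, 0)) (hγ : γ 0 = (0, 0)) (hσ : (β.trans γ.symm) 0 = 0) :
    relabel (β.trans γ.symm) hσ (prod G₀ G₁ β hβ) = prod G₀ G₁ γ hγ :=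
  Subtype.ext <| funext fun ⟨a, b⟩ => by simp [relabel_apply, prod_apply]

end Product

theorem exists_relabel_mem {U V : Set GroupTables} (hU : IsOpen U) (hV : IsOpen V)
    (hU₀ : U.Nonempty) (hV₀ : V.Nonempty) :
    ∃ (σ : Equiv.Perm ℕ) (hσ : σ 0 = 0), ∃ G ∈ U, relabel σ hσ G ∈ V := by
  obtain ⟨G₀, hG₀⟩ := hU₀
  obtain ⟨G₁, hG₁⟩ := hV₀
  obtain ⟨t₀, ht₀⟩ := exists_finset_forall_mem_of_isOpen hU hG₀
  obtain ⟨t₁, ht₁⟩ := exists_finset_forall_mem_of_isOpen hV hG₁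
  -- Label `Ḡ₀ × Ḡ₁` in two ways, by `β` and `γ`, keeping the labels seen by `t₀` on the first
  -- factor, resp. those seen by `t₁` on the second: the first copy agrees with `G₀` on `t₀`, and
  -- relabelled by `β.trans γ.symm` it becomes the second copy, which agrees with `G₁` on `t₁`.
  let S : Finset ℕ := insert 0 ((t₀ ∪ t₁).biUnion fun p => {p.1, p.2, G₀.1 p, G₁.1 p})
  have hS {p} (hp : p ∈ t₀ ∪ t₁) : p.1 ∈ S ∧ p.2 ∈ S ∧ G₀.1 p ∈ S ∧ G₁.1 p ∈ S := by
    simp only [S, Finset.mem_insert, Finset.mem_biUnion]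
    exact ⟨.inr ⟨p, hp, by simp⟩, .inr ⟨p, hp, by simp⟩, .inr ⟨p, hp, by simp⟩,
      .inr ⟨p, hp, by simp⟩⟩
  have h0 : 0 ∈ (S : Set ℕ) := Finset.mem_insert_self _ _
  obtain ⟨β, hβ⟩ := exists_equiv_eqOn_of_finite S.finite_toSet
    ⟨fun i => (i, 0), fun _ _ h => (Prod.mk.inj h).1⟩ ⟨Nat.pairEquiv.symm⟩
  obtain ⟨γ, hγ⟩ := exists_equiv_eqOn_of_finite S.finite_toSet
    ⟨fun i => (0, i), fun _ _ h => (Prod.mk.inj h).2⟩ ⟨Nat.pairEquiv.symm⟩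
  have hβ0 : β 0 = (0, 0) := hβ h0
  have hγ0 : γ 0 = (0, 0) := hγ h0
  have hσ : (β.trans γ.symm) 0 = 0 := by
    rw [Equiv.trans_apply, hβ0, ← hγ0, Equiv.symm_apply_apply]
  refine ⟨β.trans γ.symm, hσ, prod G₀ G₁ β hβ0, ht₀ _ fun p hp => ?_, ?_⟩
  · obtain ⟨h₁, h₂, h₃, -⟩ := hS (Finset.mem_union_left _ hp)
    exact prod_apply_eq_left hβ0 (hβ h₁) (hβ h₂) (hβ h₃)
  · rw [relabel_prod hβ0 hγ0]
    refine ht₁ _ fun p hp => ?_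
    obtain ⟨h₁, h₂, -, h₄⟩ := hS (Finset.mem_union_right _ hp)
    exact prod_apply_eq_right hγ0 (hγ h₁) (hγ h₂) (hγ h₄)

/-- The isomorphism class `I_H`. -/
def isoClass (H : Type*) [Group H] : Set GroupTables := {G | Nonempty (Carrier G ≃* H)}

variable {H : Type*} [Group H]

theorem preimage_relabel_isoClass (σ : Equiv.Perm ℕ) (hσ : σ 0 = 0) :
    relabel σ hσ ⁻¹' isoClass H = isoClass H :=
  ext fun _ => ⟨fun ⟨φ⟩ => ⟨(pullbackMulEquiv _ _).symm.trans φ⟩,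
    fun ⟨φ⟩ => ⟨(pullbackMulEquiv _ _).trans φ⟩⟩

def isoWitnesses (eH : ℕ ≃ H) : Set (GroupTables × (ℕ → ℕ)) :=
  {q | Function.Bijective q.2 ∧ ∀ a b, q.2 (q.1.1 (a, b)) = eH.symm (eH (q.2 a) * eH (q.2 b))}

theorem isoClass_eq_image (eH : ℕ ≃ H) : isoClass H = Prod.fst '' isoWitnesses eH := by
  ext G
  constructor
  · rintro ⟨φ⟩
    refine ⟨(G, fun n => eH.symm (φ (toC G n))), ⟨?_, fun a b => ?_⟩, rfl⟩
    · exact eH.symm.bijective.comp (φ.bijective.comp (carrierEquiv G).bijective)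
    · simp only [Equiv.apply_symm_apply, ← map_mul]
      rfl
  · rintro ⟨⟨G, f⟩, ⟨hf, hmul⟩, rfl⟩
    exact ⟨{ (carrierEquiv G).symm.trans ((Equiv.ofBijective f hf).trans eH) with
      map_mul' := fun x y => (congrArg eH (hmul x y)).trans (eH.apply_symm_apply _) }⟩

theorem isGδ_isoWitnesses (eH : ℕ ≃ H) : IsGδ (isoWitnesses eH) := by
  have hinj : IsGδ {q : GroupTables × (ℕ → ℕ) | Function.Injective q.2} := by
    simp only [Function.Injective, ofPred_forall]
    exact .iInter fun a => .iInter fun b => IsOpen.isGδ <|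
      (by fun_prop : Continuous fun q : GroupTables × (ℕ → ℕ) => (q.2 a, q.2 b)).isOpen_preimage
        {p | p.1 = p.2 → a = b} (isOpen_discrete _)
  have hsurj : IsGδ {q : GroupTables × (ℕ → ℕ) | Function.Surjective q.2} := by
    simp only [Function.Surjective, ofPred_forall, ofPred_exists]
    exact .iInter fun n => IsOpen.isGδ <| isOpen_iUnion fun m =>
      isOpen_setOf_eq_of_discreteTopology (by fun_prop) continuous_const
  have hmul : IsGδ {q : GroupTables × (ℕ → ℕ) |
      ∀ a b, q.2 (q.1.1 (a, b)) = eH.symm (eH (q.2 a) * eH (q.2 b))} := by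
    simp only [ofPred_forall]
    exact .iInter fun a => .iInter fun b => IsOpen.isGδ <| isOpen_setOf_eq_of_discreteTopology
      (continuous_snd.apply_of_discreteTopology
        ((continuous_apply _).comp (continuous_subtype_val.comp continuous_fst)))
      ((continuous_of_discreteTopology (f := fun p : ℕ × ℕ => eH.symm (eH p.1 * eH p.2))).comp
        (by fun_prop : Continuous fun q : GroupTables × (ℕ → ℕ) => (q.2 a, q.2 b)))
  simp only [isoWitnesses, Function.Bijective, ofPred_and]
  exact (hinj.inter hsurj).inter hmul

theorem analyticSet_isoClass (eH : ℕ ≃ H) : AnalyticSet (isoClass H) := by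
  have := (isGδ_isoWitnesses eH).polishSpace
  rw [isoClass_eq_image eH, ← Subtype.range_coe (s := isoWitnesses eH), ← range_comp]
  exact analyticSet_range_of_polishSpace (by fun_prop)

end GroupTables

/-- For every group `H`, the isomorphism class `I_H = {G ∈ 𝒢 : Ḡ ≅ H}` is either
meager or comeager in `𝒢`. -/
theorem isoClass_meager_or_comeager (H : Type*) [Group H] :
    IsMeagre {G : ↥GroupTables | Nonempty (Carrier G ≃* H)} ∨
      {G : ↥GroupTables | Nonempty (Carrier G ≃* H)} ∈ residual ↥GroupTables := by
  rcases isEmpty_or_nonempty (ℕ ≃ H) with hH | ⟨⟨eH⟩⟩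
  · refine .inl (IsMeagre.empty.mono fun G ⟨φ⟩ => ?_)
    exact hH.false ((GroupTables.carrierEquiv G).trans φ.toEquiv)
  · refine (GroupTables.analyticSet_isoClass eH).baireMeasurableSet.isMeagre_or_mem_residual
      fun U V hU hV hU₀ hV₀ => ?_
    obtain ⟨σ, hσ, G, hGU, hGV⟩ := GroupTables.exists_relabel_mem hU hV hU₀ hV₀
    exact ⟨GroupTables.relabelHomeomorph σ hσ, GroupTables.preimage_relabel_isoClass σ hσ,
      G, hGU, hGV⟩
end

section
/- The set {G ∈ 𝒢 : Ḡ is algebraically closed} is comeager in 𝒢. -/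
universe u

/-- A group `G` is algebraically closed if every finite system of equations and
inequations with coefficients from `G` (elements of the free product
`FreeGroup (Fin n) ∗ G`) that has a solution in some group extending `G`
has a solution in `G` itself. -/
def IsAlgClosedGroup (G : Type u) [Group G] : Prop :=
  ∀ (n k l : ℕ) (w : Fin k → Monoid.Coprod (FreeGroup (Fin n)) G)
    (v : Fin l → Monoid.Coprod (FreeGroup (Fin n)) G),
    (∃ (H : Type u) (_ : Group H) (f : G →* H), Function.Injective f ∧
      ∃ x : Fin n → H,
        (∀ i, Monoid.Coprod.lift (FreeGroup.lift x) f (w i) = 1) ∧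
        (∀ j, Monoid.Coprod.lift (FreeGroup.lift x) f (v j) ≠ 1)) →
    ∃ x' : Fin n → G,
      (∀ i, Monoid.Coprod.lift (FreeGroup.lift x') (MonoidHom.id G) (w i) = 1) ∧
      (∀ j, Monoid.Coprod.lift (FreeGroup.lift x') (MonoidHom.id G) (v j) ≠ 1)

/-!
Fix a finite system of equations and inequations whose constants are named by natural numbers.
Its value under an assignment depends on finitely many entries of the table, so the set of tables
in which it is solvable is open. If it is solvable in some extension of `Ḡ₀`, it is solvable in a
countable one `K` (generated by `Ḡ₀` and the solution); enumerating `K` by `ℕ` through a bijection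
that agrees with `Ḡ₀` on any given finite set gives tables arbitrarily close to `G₀` in which the
system is solvable. So "solvable over `Ḡ` implies solvable in `Ḡ`" fails only on the boundary of
an open set, which is nowhere dense, and there are only countably many systems.
-/

open Function Set

def FreeGroup.rightLetters {α β : Type*} [DecidableEq α] [DecidableEq β]
    (W : FreeGroup (α ⊕ β)) : Finset β :=
  (W.toWord.filterMap fun p => p.1.getRight?).toFinset

theorem FreeGroup.lift_sumElim_congr {α β H : Type*} [Group H] [DecidableEq α] [DecidableEq β]
    (x : α → H) {c c' : β → H} (W : FreeGroup (α ⊕ β)) (h : ∀ b ∈ W.rightLetters, c b = c' b) :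
    FreeGroup.lift (Sum.elim x c) W = FreeGroup.lift (Sum.elim x c') W := by
  rw [← FreeGroup.mk_toWord (x := W), FreeGroup.lift_mk, FreeGroup.lift_mk]
  congr 1
  refine List.map_congr_left ?_
  rintro ⟨a | b, s⟩ hp
  · rfl
  · rw [Sum.elim_inr, Sum.elim_inr,
      h b (List.mem_toFinset.2 (List.mem_filterMap.2 ⟨(Sum.inr b, s), hp, rfl⟩))]

theorem FreeGroup.hom_lift_apply {α H H' : Type*} [Group H] [Group H'] (φ : H →* H')
    (g : α → H) (W : FreeGroup α) : φ (FreeGroup.lift g W) = FreeGroup.lift (φ ∘ g) W :=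
  DFunLike.congr_fun (FreeGroup.ext_hom (φ.comp (FreeGroup.lift g)) _ fun a => by simp) W

theorem exists_equiv_eqOn_finset {α β : Type*} [Countable α] [Infinite α] [Countable β]
    [Infinite β] (F : Finset α) (ι : α → β) (hι : Injective ι) :
    ∃ e : α ≃ β, ∀ a ∈ F, e a = ι a := by
  classical
  set s : Set α := ↑F
  have : Infinite (sᶜ : Set α) := F.finite_toSet.infinite_compl.to_subtype
  have : Infinite ((ι '' s)ᶜ : Set β) := (F.finite_toSet.image ι).infinite_compl.to_subtype
  obtain ⟨e₂⟩ : Nonempty ((sᶜ : Set α) ≃ ((ι '' s)ᶜ : Set β)) := nonempty_equiv_of_countable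
  refine ⟨(Equiv.Set.sumCompl s).symm.trans
    (((Equiv.Set.image ι s hι).sumCongr e₂).trans (Equiv.Set.sumCompl (ι '' s))), fun a ha => ?_⟩
  simp [Equiv.Set.sumCompl_symm_apply_of_mem (show a ∈ s from ha)]

theorem IsLocallyConstant.apply_of_forall {X A Y : Type*} [TopologicalSpace X]
    {φ : X → A → Y} (hφ : ∀ a, IsLocallyConstant (φ · a)) {u : X → A}
    (hu : IsLocallyConstant u) : IsLocallyConstant fun x => φ x (u x) := by
  intro s
  have : (fun x => φ x (u x)) ⁻¹' s = ⋃ a, u ⁻¹' {a} ∩ (φ · a) ⁻¹' s := by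
    ext x; simp
  rw [this]
  exact isOpen_iUnion fun a => (hu {a}).inter (hφ a s)

theorem setOf_imp_mem_residual {X : Type*} [TopologicalSpace X] {S T : Set X} (hS : IsOpen S)
    (hT : T ⊆ closure S) : {x | x ∈ T → x ∈ S} ∈ residual X := by
  refine Filter.mem_of_superset (coborder_mem_residual hS.isLocallyClosed) ?_
  rw [coborder_eq_union_closure_compl]
  rintro x (hx | hx) hxT
  · exact hx
  · exact absurd (hT hxT) hx

section Systems

variable {α β H H' : Type*} [Group H] [Group H'] {k l : ℕ}

/-- Letters `Sum.inl a` are unknowns, letters `Sum.inr b` are constants, interpreted through `c`. -/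
def IsSolution (c : β → H) (x : α → H) (W : Fin k → FreeGroup (α ⊕ β))
    (V : Fin l → FreeGroup (α ⊕ β)) : Prop :=
  (∀ i, FreeGroup.lift (Sum.elim x c) (W i) = 1) ∧ ∀ j, FreeGroup.lift (Sum.elim x c) (V j) ≠ 1

theorem isSolution_comp_iff (φ : H →* H') (hφ : Injective φ) {c : β → H} {x : α → H}
    {W : Fin k → FreeGroup (α ⊕ β)} {V : Fin l → FreeGroup (α ⊕ β)} :
    IsSolution (φ ∘ c) (φ ∘ x) W V ↔ IsSolution c x W V := by
  simp only [IsSolution, ne_eq, ← Sum.comp_elim, ← FreeGroup.hom_lift_apply, map_eq_one_iff φ hφ]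

def systemConstants [DecidableEq α] [DecidableEq β] (W : Fin k → FreeGroup (α ⊕ β))
    (V : Fin l → FreeGroup (α ⊕ β)) : Finset β :=
  (Finset.univ.biUnion fun i => (W i).rightLetters) ∪
    Finset.univ.biUnion fun j => (V j).rightLetters

theorem IsSolution.congr_constants [DecidableEq α] [DecidableEq β] {c c' : β → H} {x : α → H}
    {W : Fin k → FreeGroup (α ⊕ β)} {V : Fin l → FreeGroup (α ⊕ β)}
    (h : ∀ b ∈ systemConstants W V, c b = c' b) (hs : IsSolution c x W V) :
    IsSolution c' x W V := by
  have hW : ∀ i, FreeGroup.lift (Sum.elim x c) (W i) = FreeGroup.lift (Sum.elim x c') (W i) :=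
    fun i => FreeGroup.lift_sumElim_congr x (W i) fun b hb => h b <| Finset.mem_union_left _ <|
      Finset.mem_biUnion.2 ⟨i, Finset.mem_univ i, hb⟩
  have hV : ∀ j, FreeGroup.lift (Sum.elim x c) (V j) = FreeGroup.lift (Sum.elim x c') (V j) :=
    fun j => FreeGroup.lift_sumElim_congr x (V j) fun b hb => h b <| Finset.mem_union_right _ <|
      Finset.mem_biUnion.2 ⟨j, Finset.mem_univ j, hb⟩
  exact ⟨fun i => hW i ▸ hs.1 i, fun j => hV j ▸ hs.2 j⟩

def coprodWord (c : β → H) : FreeGroup (α ⊕ β) →* Monoid.Coprod (FreeGroup α) H :=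
  FreeGroup.lift (Sum.elim (fun a => Monoid.Coprod.inl (FreeGroup.of a)) (Monoid.Coprod.inr ∘ c))

theorem coprod_lift_coprodWord (c : β → H) (x : α → H') (f : H →* H') (W : FreeGroup (α ⊕ β)) :
    Monoid.Coprod.lift (FreeGroup.lift x) f (coprodWord c W) =
      FreeGroup.lift (Sum.elim x (f ∘ c)) W := by
  rw [coprodWord, FreeGroup.hom_lift_apply]
  congr 1
  ext (a | b) <;> simp

theorem coprodWord_surjective {c : β → H} (hc : Surjective c) :
    Surjective (coprodWord (α := α) c) := by
  intro y
  induction y using Monoid.Coprod.induction_on with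
  | inl w =>
    have : (coprodWord (α := α) c).comp (FreeGroup.map Sum.inl) = Monoid.Coprod.inl :=
      FreeGroup.ext_hom _ _ fun a => by simp [coprodWord]
    exact ⟨FreeGroup.map Sum.inl w, DFunLike.congr_fun this w⟩
  | inr h =>
    obtain ⟨b, rfl⟩ := hc h
    exact ⟨FreeGroup.of (Sum.inr b), by simp [coprodWord]⟩
  | mul _ _ h₁ h₂ =>
    obtain ⟨w₁, rfl⟩ := h₁
    obtain ⟨w₂, rfl⟩ := h₂
    exact ⟨w₁ * w₂, map_mul _ _ _⟩

end Systems

namespace GroupTables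

theorem isLocallyConstant_apply (p : ℕ × ℕ) : IsLocallyConstant fun G : ↥GroupTables => G.1 p :=
  (IsLocallyConstant.iff_continuous _).2 ((continuous_apply p).comp continuous_subtype_val)

theorem isLocallyConstant_inv (a : ℕ) :
    IsLocallyConstant fun G : ↥GroupTables => fromC G (toC G a)⁻¹ := by
  refine IsLocallyConstant.iff_isOpen_fiber.2 fun b => ?_
  have : (fun G : ↥GroupTables => fromC G (toC G a)⁻¹) ⁻¹' {b} = {G | G.1 (a, b) = 0} :=
    Set.ext fun G => (mul_eq_one_iff_inv_eq (a := toC G a) (b := toC G b)).symm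
  rw [this]
  exact (isLocallyConstant_apply (a, b)).isOpen_fiber 0

noncomputable def wordValue {α : Type*} (a : α → ℕ) (W : FreeGroup α) (G : ↥GroupTables) : ℕ :=
  fromC G (FreeGroup.lift (toC G ∘ a) W)

theorem isLocallyConstant_wordValue {α : Type*} (a : α → ℕ) (W : FreeGroup α) :
    IsLocallyConstant (wordValue a W) := by
  induction W using FreeGroup.induction_on with
  | C1 =>
    have : wordValue a 1 = fun _ => 0 := funext fun G => congrArg (fromC G) (map_one _)
    exact this ▸ IsLocallyConstant.const 0
  | of s =>
    have : wordValue a (.of s) = fun _ => a s :=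
      funext fun G => congrArg (fromC G) (FreeGroup.lift_apply_of)
    exact this ▸ IsLocallyConstant.const (a s)
  | inv_of s _ =>
    have : wordValue a (.of s)⁻¹ = fun G => fromC G (toC G (a s))⁻¹ :=
      funext fun G => congrArg (fromC G) (by rw [map_inv, FreeGroup.lift_apply_of]; rfl)
    exact this ▸ isLocallyConstant_inv (a s)
  | mul W₁ W₂ h₁ h₂ =>
    have : wordValue a (W₁ * W₂) = fun G => G.1 (wordValue a W₁ G, wordValue a W₂ G) :=
      funext fun G => congrArg (fromC G) (map_mul _ _ _)
    exact this ▸ IsLocallyConstant.apply_of_forall isLocallyConstant_apply (h₁.prodMk h₂)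

theorem exists_finset_of_mem_isOpen {U : Set ↥GroupTables} (hU : IsOpen U) {G₀ : ↥GroupTables}
    (hG₀ : G₀ ∈ U) :
    ∃ I : Finset (ℕ × ℕ), ∀ G : ↥GroupTables, (∀ p ∈ I, G.1 p = G₀.1 p) → G ∈ U := by
  obtain ⟨t, ht, rfl⟩ := isOpen_induced_iff.mp hU
  obtain ⟨I, u, hu, hI⟩ := isOpen_pi_iff.mp ht G₀.1 hG₀
  refine ⟨I, fun G hG => hI fun p hp => ?_⟩
  rw [hG p hp]
  exact (hu p hp).2

section Transport

variable {B : Type*} [Group B] (e : ℕ ≃ B)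

def tableOf : ℕ × ℕ → ℕ := fun p => e.symm (e p.1 * e p.2)

theorem tableOf_mem (h0 : e 0 = 1) : tableOf e ∈ GroupTables := by
  have h0' : e.symm 1 = 0 := e.symm_apply_eq.2 h0.symm
  refine ⟨fun a b c => ?_, fun a => ?_, fun a => ?_, fun a => ⟨e.symm (e a)⁻¹, ?_, ?_⟩⟩ <;>
    simp [tableOf, mul_assoc, h0, h0']

noncomputable def mulEquivOf (h0 : e 0 = 1) : Carrier ⟨tableOf e, tableOf_mem e h0⟩ ≃* B where
  toFun x := e (fromC _ x)
  invFun y := toC _ (e.symm y)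
  left_inv _ := e.symm_apply_apply _
  right_inv _ := e.apply_symm_apply _
  map_mul' _ _ := e.apply_symm_apply _

end Transport

theorem exists_mulEquiv_agree {B : Type*} [Group B] [Countable B] (G₀ : ↥GroupTables)
    (f : Carrier G₀ →* B) (hf : Injective f) (I : Finset (ℕ × ℕ)) (S : Finset ℕ) :
    ∃ (G : ↥GroupTables) (μ : Carrier G ≃* B),
      (∀ p ∈ I, G.1 p = G₀.1 p) ∧ ∀ m ∈ S, μ (toC G m) = f (toC G₀ m) := by
  classical
  have hι : Injective (f ∘ toC G₀) := hf.comp fun _ _ h => h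
  have : Infinite B := Infinite.of_injective _ hι
  -- `e` has to agree with `f` on every index read by the cylinder `I` and on the constants `S`
  set F := S ∪ I.image Prod.fst ∪ I.image Prod.snd ∪ I.image G₀.1 ∪ {0}
  obtain ⟨e, he⟩ := exists_equiv_eqOn_finset F (f ∘ toC G₀) hι
  have h0 : e 0 = 1 := (he 0 (by simp [F])).trans (map_one f)
  refine ⟨⟨tableOf e, tableOf_mem e h0⟩, mulEquivOf e h0, ?_, fun m hm => he m (by simp [F, hm])⟩
  rintro ⟨a, b⟩ hp
  have ha : a ∈ F := by simp only [F, Finset.mem_union, Finset.mem_image]; grind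
  have hb : b ∈ F := by simp only [F, Finset.mem_union, Finset.mem_image]; grind
  have hab : G₀.1 (a, b) ∈ F := by simp only [F, Finset.mem_union, Finset.mem_image]; grind
  show e.symm (e a * e b) = G₀.1 (a, b)
  rw [he a ha, he b hb, e.symm_apply_eq, he _ hab]
  exact (map_mul f _ _).symm

section Solvability

variable {α : Type*} {k l : ℕ} (W : Fin k → FreeGroup (α ⊕ ℕ)) (V : Fin l → FreeGroup (α ⊕ ℕ))

def SolvableIn (G : ↥GroupTables) : Prop :=
  ∃ x : α → Carrier G, IsSolution (toC G) x W V

def SolvableInExtension (G : ↥GroupTables) : Prop :=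
  ∃ (H : Type) (_ : Group H) (f : Carrier G →* H), Injective f ∧
    ∃ x : α → H, IsSolution (f ∘ toC G) x W V

theorem solvableIn_iff_wordValue (G : ↥GroupTables) :
    SolvableIn W V G ↔ ∃ x : α → ℕ, (∀ i, wordValue (Sum.elim x id) (W i) G = 0) ∧
      ∀ j, wordValue (Sum.elim x id) (V j) G ≠ 0 := by
  simp only [SolvableIn, IsSolution, wordValue, Sum.comp_elim]
  rfl

theorem isOpen_setOf_solvableIn : IsOpen {G | SolvableIn W V G} := by
  simp only [solvableIn_iff_wordValue, ofPred_exists, ofPred_and, ofPred_forall]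
  exact isOpen_iUnion fun x =>
    (isOpen_iInter_of_finite fun i => (isLocallyConstant_wordValue _ (W i)).isOpen_fiber 0).inter
      (isOpen_iInter_of_finite fun j => isLocallyConstant_wordValue _ (V j) {0}ᶜ)

theorem setOf_solvableInExtension_subset_closure [Countable α] :
    {G | SolvableInExtension W V G} ⊆ closure {G | SolvableIn W V G} := by
  classical
  rintro G₀ ⟨H, _, f, hf, x, hx⟩
  refine mem_closure_iff.2 fun U hU hG₀U => ?_
  obtain ⟨I, hI⟩ := exists_finset_of_mem_isOpen hU hG₀U
  -- the subgroup generated by `Ḡ₀` and the solution is a countable extension of `Ḡ₀`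
  set Φ := FreeGroup.lift (Sum.elim x (f ∘ toC G₀))
  have : Countable Φ.range := Φ.rangeRestrict_surjective.countable
  let f' : Carrier G₀ →* Φ.range :=
    f.codRestrict Φ.range fun g => Φ.mem_range.2 ⟨.of (.inr (fromC G₀ g)), FreeGroup.lift_apply_of⟩
  let x' : α → Φ.range := fun a => ⟨x a, Φ.mem_range.2 ⟨.of (.inl a), FreeGroup.lift_apply_of⟩⟩
  have hx' : IsSolution (f' ∘ toC G₀) x' W V :=
    (isSolution_comp_iff Φ.range.subtype Φ.range.subtype_injective).1 hx
  obtain ⟨G, μ, hGI, hμ⟩ := exists_mulEquiv_agree G₀ f'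
    (fun _ _ h => hf (congrArg Subtype.val h)) I (systemConstants W V)
  refine ⟨G, hI G hGI, μ.symm ∘ x', ?_⟩
  refine ((isSolution_comp_iff μ.symm.toMonoidHom μ.symm.injective).2 hx').congr_constants
    fun m hm => ?_
  exact μ.symm_apply_eq.2 (hμ m hm).symm

theorem eventually_solvableInExtension_imp_solvableIn [Countable α] :
    ∀ᶠ G in residual ↥GroupTables, SolvableInExtension W V G → SolvableIn W V G :=
  setOf_imp_mem_residual (isOpen_setOf_solvableIn W V)
    (setOf_solvableInExtension_subset_closure W V)

end Solvability

theorem isAlgClosedGroup_of_forall_solvableIn {G : ↥GroupTables}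
    (h : ∀ (n k l : ℕ) (W : Fin k → FreeGroup (Fin n ⊕ ℕ)) (V : Fin l → FreeGroup (Fin n ⊕ ℕ)),
      SolvableInExtension W V G → SolvableIn W V G) :
    IsAlgClosedGroup (Carrier G) := by
  rintro n k l w v ⟨H, _, f, hf, x, hw, hv⟩
  have hsurj := coprodWord_surjective (α := Fin n) (c := toC G) fun y => ⟨fromC G y, rfl⟩
  choose W hW using fun i => hsurj (w i)
  choose V hV using fun j => hsurj (v j)
  obtain ⟨x', hx'W, hx'V⟩ := h n k l W V ⟨H, _, f, hf, x,
    fun i => by rw [← coprod_lift_coprodWord, hW i]; exact hw i,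
    fun j => by rw [← coprod_lift_coprodWord, hV j]; exact hv j⟩
  refine ⟨x', fun i => ?_, fun j => ?_⟩
  · rw [← hW i, coprod_lift_coprodWord]; exact hx'W i
  · rw [← hV j, coprod_lift_coprodWord]; exact hx'V j

end GroupTables

/-- The set of tables `G ∈ 𝒢` whose group `Ḡ` is algebraically closed is
comeager in `𝒢`. -/
theorem algClosed_comeager :
    {G : ↥GroupTables | IsAlgClosedGroup (Carrier G)} ∈ residual ↥GroupTables := by
  have : ∀ᶠ G in residual ↥GroupTables, ∀ (n k l : ℕ) (W : Fin k → FreeGroup (Fin n ⊕ ℕ))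
      (V : Fin l → FreeGroup (Fin n ⊕ ℕ)),
      GroupTables.SolvableInExtension W V G → GroupTables.SolvableIn W V G := by
    simp only [eventually_countable_forall]
    exact fun n k l W V => GroupTables.eventually_solvableInExtension_imp_solvableIn W V
  exact this.mono fun G => GroupTables.isAlgClosedGroup_of_forall_solvableIn
end

section
/- For every G₀ ∈ 𝒢 such that Ḡ₀ is algebraically closed, the isomorphism class {G ∈ 𝒢 : Ḡ ≅ Ḡ₀} is dense in 𝒢. -/
universe u

/-! A basic neighbourhood of a table `G` prescribes finitely many entries `G (a, b) = c`.
On the finite set `T ∋ 0` of numbers involved these entries form a partial multiplication,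
realised in `Ḡ₀ × Ḡ ⊇ Ḡ₀` by the elements `(1, a)`; algebraic closedness pulls this system of
equations `x_a x_b = x_c` and inequations `x_a ≠ x_b` down into `Ḡ₀`. Extending the resulting
injection `T → ℕ` to a permutation `σ` of `ℕ` (it fixes `0`, the only idempotent) and pulling `G₀`
back along `σ` gives a copy of `Ḡ₀` that agrees with `G` on the prescribed entries. -/

open Function

theorem FreeGroup.lift_map_apply {α β H : Type*} [Group H] (e : α → β) (x : β → H)
    (w : FreeGroup α) : FreeGroup.lift x (FreeGroup.map e w) = FreeGroup.lift (x ∘ e) w := by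
  rw [← MonoidHom.comp_apply]
  congr 1
  ext
  simp

theorem IsAlgClosedGroup.exists_solution {G : Type u} [Group G] (hG : IsAlgClosedGroup G)
    {α ι κ : Type*} [Finite α] [Finite ι] [Finite κ]
    (w : ι → FreeGroup α) (v : κ → FreeGroup α) {H : Type u} [Group H] (f : G →* H)
    (hf : Injective f) (x : α → H) (hw : ∀ i, FreeGroup.lift x (w i) = 1)
    (hv : ∀ j, FreeGroup.lift x (v j) ≠ 1) :
    ∃ x' : α → G, (∀ i, FreeGroup.lift x' (w i) = 1) ∧ (∀ j, FreeGroup.lift x' (v j) ≠ 1) := by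
  let e := Finite.equivFin α
  let eι := Finite.equivFin ι
  let eκ := Finite.equivFin κ
  obtain ⟨x', hw', hv'⟩ := hG (Nat.card α) (Nat.card ι) (Nat.card κ)
    (fun i => .inl (FreeGroup.map e (w (eι.symm i))))
    (fun j => .inl (FreeGroup.map e (v (eκ.symm j))))
    ⟨H, inferInstance, f, hf, x ∘ e.symm,
      fun i => by simpa [FreeGroup.lift_map_apply, comp_def] using hw (eι.symm i),
      fun j => by simpa [FreeGroup.lift_map_apply, comp_def] using hv (eκ.symm j)⟩
  refine ⟨x' ∘ e, fun i => ?_, fun j => ?_⟩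
  · simpa [FreeGroup.lift_map_apply] using hw' (eι i)
  · simpa [FreeGroup.lift_map_apply] using hv' (eκ j)

theorem IsAlgClosedGroup.exists_partial_embedding {G K : Type u} [Group G] [Group K]
    (hG : IsAlgClosedGroup G) {ι : Type*} [Finite ι] {t : ι → K} (ht : Injective t) :
    ∃ y : ι → G, Injective y ∧ ∀ i j k, t i * t j = t k → y i * y j = y k := by
  let w : {p : ι × ι × ι // t p.1 * t p.2.1 = t p.2.2} → FreeGroup ι :=
    fun p => .of p.1.1 * .of p.1.2.1 * (.of p.1.2.2)⁻¹
  let v : {p : ι × ι // p.1 ≠ p.2} → FreeGroup ι := fun p => .of p.1.1 * (.of p.1.2)⁻¹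
  obtain ⟨y, hw, hv⟩ := hG.exists_solution w v (MonoidHom.inl G K)
    (fun _ _ h => congrArg Prod.fst h) (fun i => (1, t i))
    (fun ⟨_, hp⟩ => by simp [w, Prod.ext_iff, hp])
    (fun ⟨_, hp⟩ => by simpa [v, Prod.ext_iff, mul_inv_eq_one] using ht.ne hp)
  refine ⟨y, fun i j hij => ?_, fun i j k hijk => ?_⟩
  · by_contra hne
    exact hv ⟨(i, j), hne⟩ (by simp [v, hij])
  · simpa [w, mul_inv_eq_one] using hw ⟨(i, j, k), hijk⟩

theorem Equiv.Perm.exists_apply_eq_of_injective {α ι : Type*} [Infinite α] [Finite ι]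
    {t s : ι → α} (ht : Injective t) (hs : Injective s) :
    ∃ σ : Equiv.Perm α, ∀ i, σ (t i) = s i := by
  obtain ⟨σ, hσ⟩ := Cardinal.extend_function_of_lt
    ((Equiv.ofInjective t ht).symm.toEmbedding.trans ⟨s, hs⟩)
    ((Set.finite_range t).lt_aleph0.trans_le (Cardinal.aleph0_le_mk α)) ⟨Equiv.refl α⟩
  exact ⟨σ, fun i => by simpa using hσ ⟨t i, i, rfl⟩⟩

namespace GroupTables

def permute (G : ↥GroupTables) (σ : Equiv.Perm ℕ) (hσ : σ 0 = 0) : ↥GroupTables :=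
  ⟨fun p => σ.symm (G.1 (σ p.1, σ p.2)), by
    obtain ⟨hassoc, hmul0, h0mul, hinv⟩ := G.2
    have hσ' : σ.symm 0 = 0 := σ.symm_apply_eq.2 hσ.symm
    refine ⟨fun a b c => ?_, fun a => ?_, fun a => ?_, fun a => ?_⟩
    · simp [hassoc]
    · simp [hσ, hmul0]
    · simp [hσ, h0mul]
    · obtain ⟨b, hab, hba⟩ := hinv (σ a)
      exact ⟨σ.symm b, by simp [hab, hσ'], by simp [hba, hσ']⟩⟩

theorem permute_apply (G : ↥GroupTables) (σ : Equiv.Perm ℕ) (hσ : σ 0 = 0) (p : ℕ × ℕ) :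
    (permute G σ hσ).1 p = σ.symm (G.1 (σ p.1, σ p.2)) := rfl

def permuteMulEquiv (G : ↥GroupTables) (σ : Equiv.Perm ℕ) (hσ : σ 0 = 0) :
    Carrier (permute G σ hσ) ≃* Carrier G where
  toEquiv := σ
  map_mul' _ _ := σ.apply_symm_apply _

end GroupTables

theorem dense_of_forall_finset_exists_eqOn {ι β : Type*} [TopologicalSpace β]
    [DiscreteTopology β] {X : Set (ι → β)} {S : Set X}
    (h : ∀ x : X, ∀ I : Finset ι, ∃ y ∈ S, ∀ i ∈ I, (y : ι → β) i = (x : ι → β) i) : Dense S := by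
  intro x
  rw [mem_closure_iff_nhds]
  intro t ht
  rw [nhds_subtype, Filter.mem_comap] at ht
  obtain ⟨U, hU, hUt⟩ := ht
  rw [nhds_pi, Filter.mem_pi] at hU
  obtain ⟨I, hI, u, hu, hIu⟩ := hU
  obtain ⟨y, hyS, hy⟩ := h x hI.toFinset
  refine ⟨y, hUt (hIu fun i hi => ?_), hyS⟩
  rw [hy i (hI.mem_toFinset.2 hi)]
  exact mem_of_mem_nhds (hu i)

open GroupTables in
theorem exists_mulEquiv_eqOn_finset {G₀ : ↥GroupTables} (hG₀ : IsAlgClosedGroup (Carrier G₀))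
    (G : ↥GroupTables) (I : Finset (ℕ × ℕ)) :
    ∃ G' ∈ {G : ↥GroupTables | Nonempty (Carrier G ≃* Carrier G₀)}, ∀ p ∈ I, G'.1 p = G.1 p := by
  classical
  let T : Finset ℕ := insert 0 (I.biUnion fun p => {p.1, p.2, G.1 p})
  obtain ⟨y, hy_inj, hy_mul⟩ := hG₀.exists_partial_embedding
    (t := fun a : T => toC G a) Subtype.val_injective
  obtain ⟨σ, hσ⟩ := Equiv.Perm.exists_apply_eq_of_injective
    (t := fun a : T => (a : ℕ)) (s := fun a => fromC G₀ (y a)) Subtype.val_injective hy_inj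
  have h0T : 0 ∈ T := Finset.mem_insert_self _ _
  have hσ0 : σ 0 = 0 := by
    have hy0 : y ⟨0, h0T⟩ * y ⟨0, h0T⟩ = y ⟨0, h0T⟩ := hy_mul _ _ _ (G.2.2.1 0)
    rw [mul_eq_left] at hy0
    exact (hσ ⟨0, h0T⟩).trans (congrArg (fromC G₀) hy0)
  refine ⟨permute G₀ σ hσ0, ⟨permuteMulEquiv G₀ σ hσ0⟩, fun p hp => ?_⟩
  have hpT : ∀ a ∈ ({p.1, p.2, G.1 p} : Finset ℕ), a ∈ T :=
    fun a ha => Finset.mem_insert_of_mem (Finset.mem_biUnion.2 ⟨p, hp, ha⟩)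
  have h1 := hpT p.1 (by simp)
  have h2 := hpT p.2 (by simp)
  have h3 := hpT (G.1 p) (by simp)
  have hp_mul := hy_mul ⟨p.1, h1⟩ ⟨p.2, h2⟩ ⟨G.1 p, h3⟩ rfl
  rw [permute_apply, hσ ⟨p.1, h1⟩, hσ ⟨p.2, h2⟩]
  change σ.symm (fromC G₀ (y _ * y _)) = _
  rw [hp_mul, ← hσ ⟨G.1 p, h3⟩, Equiv.symm_apply_apply]

/-- The isomorphism class of any algebraically closed group coded in `𝒢`
is dense in `𝒢`. -/
theorem algClosed_isoClass_dense (G₀ : ↥GroupTables)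
    (h : IsAlgClosedGroup (Carrier G₀)) :
    Dense {G : ↥GroupTables | Nonempty (Carrier G ≃* Carrier G₀)} :=
  dense_of_forall_finset_exists_eqOn (exists_mulEquiv_eqOn_finset h)
end

section
/- Let G and H be countable groups such that H is countably infinite and homogeneous. Then there is an injective group homomorphism G → H if and only if for every finitely generated subgroup K of G there is an injective group homomorphism K → H. -/
universe u v

/-- A countably infinite group `H` is homogeneous if every isomorphism between two
finitely generated subgroups of `H` extends to an automorphism of `H`. -/
def IsHomogeneousGroup (H : Type v) [Group H] : Prop :=
  ∀ (A B : Subgroup H), A.FG → B.FG → ∀ α : A ≃* B,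
    ∃ β : H ≃* H, ∀ a : A, β (a : H) = (α a : H)

/-!
Enumerating `G` writes it as the union of a chain `K₀ ≤ K₁ ≤ ⋯` of finitely generated subgroups.
Given an embedding of `Kₙ` into `H`, take any embedding of `Kₙ₊₁`; the two images of `Kₙ` are
isomorphic finitely generated subgroups of `H`, so by homogeneity an automorphism of `H` carries
one onto the other, and correcting by it makes the embedding of `Kₙ₊₁` extend the one of `Kₙ`.
The resulting compatible chain of embeddings glues to an embedding of `G`.
-/

open Function

section

variable {G : Type*} {H : Type*} [Group G] [Group H]

theorem Subgroup.FG.range_fg {A : Subgroup G} (hA : A.FG) (f : A →* H) : f.range.FG :=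
  have : Group.FG A := (Group.fg_iff_subgroup_fg A).mpr hA
  (Group.fg_iff_subgroup_fg _).mp inferInstance

theorem IsHomogeneousGroup.exists_extension (hH : IsHomogeneousGroup H) {A B : Subgroup G}
    (hAB : A ≤ B) (hA : A.FG) {f : A →* H} (hf : Injective f) {e : B →* H} (he : Injective e) :
    ∃ f' : B →* H, Injective f' ∧ f'.comp (Subgroup.inclusion hAB) = f := by
  set eA := e.comp (Subgroup.inclusion hAB)
  have heA : Injective eA := he.comp (Subgroup.inclusion_injective hAB)
  obtain ⟨β, hβ⟩ := hH _ _ (hA.range_fg f) (hA.range_fg eA)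
    ((MonoidHom.ofInjective hf).symm.trans (MonoidHom.ofInjective heA))
  have hβf (a : A) : β (f a) = eA a := by
    simpa [MonoidHom.ofInjective_apply] using hβ (MonoidHom.ofInjective hf a)
  refine ⟨β.symm.toMonoidHom.comp e, β.symm.injective.comp he, MonoidHom.ext fun a => ?_⟩
  simp only [MonoidHom.coe_comp, MulEquiv.coe_toMonoidHom, comp_apply,
    MulEquiv.symm_apply_eq, hβf]
  rfl

variable (G) in
theorem exists_monotone_fg_subgroups_exhausting [Countable G] :
    ∃ K : ℕ → Subgroup G, Monotone K ∧ (∀ n, (K n).FG) ∧ ∀ x, ∃ n, x ∈ K n := by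
  obtain ⟨g, hg⟩ := exists_surjective_nat G
  refine ⟨fun n => Subgroup.closure (g '' Set.Iic n), fun m n hmn => ?_, fun n => ?_, fun x => ?_⟩
  · exact Subgroup.closure_mono (Set.image_mono (Set.Iic_subset_Iic.mpr hmn))
  · exact (Subgroup.fg_iff _).mpr ⟨_, rfl, (Set.finite_Iic n).image g⟩
  · obtain ⟨n, rfl⟩ := hg x
    exact ⟨n, Subgroup.subset_closure (Set.mem_image_of_mem g (Set.mem_Iic.mpr le_rfl))⟩

theorem exists_compatible_injective_homs_of_extension {K : ℕ → Subgroup G} (hK : Monotone K)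
    {f₀ : K 0 →* H} (hf₀ : Injective f₀)
    (hext : ∀ n (f : K n →* H), Injective f →
      ∃ f' : K (n + 1) →* H, Injective f' ∧ f'.comp (Subgroup.inclusion (hK n.le_succ)) = f) :
    ∃ f : ∀ n, K n →* H, (∀ n, Injective (f n)) ∧
      ∀ m n (h : m ≤ n), (f n).comp (Subgroup.inclusion (hK h)) = f m := by
  choose extend hext_inj hext_comp using hext
  let f (n : ℕ) : {φ : K n →* H // Injective φ} :=
    Nat.rec ⟨f₀, hf₀⟩ (fun n φ => ⟨extend n φ.1 φ.2, hext_inj n φ.1 φ.2⟩) n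
  refine ⟨fun n => (f n).1, fun n => (f n).2, fun m n hmn => ?_⟩
  induction n, hmn using Nat.le_induction with
  | base => exact MonoidHom.ext fun _ => rfl
  | succ n hmn ih =>
    have hsucc : (f (n + 1)).1.comp (Subgroup.inclusion (hK n.le_succ)) = (f n).1 :=
      hext_comp n (f n).1 (f n).2
    calc (f (n + 1)).1.comp (Subgroup.inclusion _)
        = ((f (n + 1)).1.comp (Subgroup.inclusion (hK n.le_succ))).comp
            (Subgroup.inclusion (hK hmn)) := MonoidHom.ext fun _ => rfl
      _ = (f m).1 := by rw [hsucc, ih]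

theorem exists_injective_of_compatible_injective_homs {ι : Type*} [Preorder ι] [IsDirectedOrder ι]
    {K : ι → Subgroup G} (hK : Monotone K) (hcov : ∀ x, ∃ i, x ∈ K i) {f : ∀ i, K i →* H}
    (hf : ∀ i, Injective (f i))
    (hcomp : ∀ i j (h : i ≤ j), (f j).comp (Subgroup.inclusion (hK h)) = f i) :
    ∃ F : G →* H, Injective F := by
  choose idx hidx using hcov
  let F (x : G) : H := f (idx x) ⟨x, hidx x⟩
  have hF (i : ι) (x : G) (hx : x ∈ K i) : F x = f i ⟨x, hx⟩ := by
    obtain ⟨k, hxk, hik⟩ := directed_of (· ≤ ·) (idx x) i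
    show f (idx x) _ = _
    rw [← hcomp _ k hxk, ← hcomp i k hik]
    rfl
  have common_index (x y : G) : ∃ k, x ∈ K k ∧ y ∈ K k := by
    obtain ⟨k, hxk, hyk⟩ := directed_of (· ≤ ·) (idx x) (idx y)
    exact ⟨k, hK hxk (hidx x), hK hyk (hidx y)⟩
  refine ⟨MonoidHom.mk' F fun x y => ?_, fun x y hxy => ?_⟩
  · obtain ⟨k, hx, hy⟩ := common_index x y
    rw [hF k _ (mul_mem hx hy), hF k x hx, hF k y hy, ← map_mul]
    rfl
  · obtain ⟨k, hx, hy⟩ := common_index x y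
    rw [MonoidHom.mk'_apply, hF k x hx, hF k y hy] at hxy
    exact congrArg Subtype.val (hf k hxy)

end

theorem embeds_iff_fg_subgroups_embed_general (G : Type u) (H : Type v) [Group G] [Group H]
    [Countable G] (hH : IsHomogeneousGroup H) :
    (∃ f : G →* H, Function.Injective f) ↔
      ∀ K : Subgroup G, K.FG → ∃ f : K →* H, Function.Injective f := by
  refine ⟨fun ⟨f, hf⟩ K _ => ⟨f.comp K.subtype, hf.comp K.subtype_injective⟩, fun hfg => ?_⟩
  obtain ⟨K, hK, hKfg, hcov⟩ := exists_monotone_fg_subgroups_exhausting G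
  obtain ⟨f₀, hf₀⟩ := hfg (K 0) (hKfg 0)
  obtain ⟨f, hf, hcomp⟩ := exists_compatible_injective_homs_of_extension hK hf₀ fun n _ hφ =>
    have ⟨e, he⟩ := hfg (K (n + 1)) (hKfg (n + 1))
    hH.exists_extension (hK n.le_succ) (hKfg n) hφ he
  exact exists_injective_of_compatible_injective_homs hK hcov hf hcomp

/-- Let `G` and `H` be countable groups with `H` countably infinite and homogeneous.
Then `G` embeds into `H` if and only if every finitely generated subgroup of `G`
embeds into `H`. -/
theorem embeds_iff_fg_subgroups_embed (G : Type u) (H : Type v) [Group G] [Group H]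
    [Countable G] [Countable H] [Infinite H] (hH : IsHomogeneousGroup H) :
    (∃ f : G →* H, Function.Injective f) ↔
      ∀ K : Subgroup G, K.FG → ∃ f : K →* H, Function.Injective f :=
  embeds_iff_fg_subgroups_embed_general G H hH
end
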